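/- Let 0 < γ_min ≤ γ ≤ γ_max, 0 < θ_min ≤ θ ≤ θ_max, a < g(γ_min, θ_max), b > g(γ_max, θ_min), and x₀ > 0. For any sequences (γ_j) in [γ_min, γ_max] and (θ_j) in [θ_min, θ_max], define x_{j+1} = x_j/(1+θ_j x_j) + 2γ_j. Then there exists N (depending only on x₀, a, b and the bounds) such that x_j ∈ [a,b] for all j ≥ N. -/

import Mathlib

/-!
Write `T x = x / (1 + θ x) + 2γ`. Since `T x - T y = (x - y) / ((1 + θ x)(1 + θ y))`, on `[0, ∞)`
the map `T` contracts distances to its fixed point `p = g(γ, θ)` by the factor `1 / (1 + θ p) < 1`.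
As `T` is increasing in `γ` and decreasing in `θ`, each step of the orbit lies between the
maps with parameters `(γ_min, θ_max)` and `(γ_max, θ_min)`. Hence the positive parts of
`g(γ_min, θ_max) - x_j` and of `x_j - g(γ_max, θ_min)` decay geometrically, at a rate and from an
initial size that depend only on `x₀` and the bounds.
-/

noncomputable def gFix (γ θ : ℝ) : ℝ := γ + Real.sqrt (γ ^ 2 + 2 * γ / θ)

noncomputable def stepMap (γ θ x : ℝ) : ℝ := x / (1 + θ * x) + 2 * γ

lemma div_le_max_zero_div {u D k : ℝ} (hk : 0 < k) (hkD : k ≤ D) : u / D ≤ max u 0 / k := by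
  calc u / D ≤ max u 0 / D := div_le_div_of_nonneg_right (le_max_left u 0) (hk.trans_le hkD).le
    _ ≤ max u 0 / k := div_le_div_of_nonneg_left (le_max_right u 0) hk hkD

lemma exists_forall_ge_lt_of_le_max_zero_div {k B ε : ℝ} (hk : 1 < k) (hε : 0 < ε) :
    ∃ N : ℕ, ∀ e : ℕ → ℝ, e 0 ≤ B → (∀ j, e (j + 1) ≤ max (e j) 0 / k) →
      ∀ j, N ≤ j → e j < ε := by
  obtain ⟨N, hN⟩ := pow_unbounded_of_one_lt (max B 0 / ε) hk
  refine ⟨N, fun e he0 hstep j hj => ?_⟩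
  have hkpos : 0 < k := by linarith
  have hdecay : ∀ j, max (e j) 0 ≤ max B 0 / k ^ j := by
    intro j
    induction j with
    | zero => simpa using max_le_max_right 0 he0
    | succ j ih =>
      refine max_le ((hstep j).trans ?_) (by positivity)
      rw [pow_succ, ← div_div]
      gcongr
  calc e j ≤ max (e j) 0 := le_max_left _ _
    _ ≤ max B 0 / k ^ j := hdecay j
    _ ≤ max B 0 / k ^ N := by gcongr; exact hk.le
    _ < ε := by rwa [div_lt_iff₀ (by positivity), mul_comm, ← div_lt_iff₀ hε]

section stepMap

variable {γ θ x y : ℝ}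

lemma stepMap_pos (hγ : 0 < γ) (hθ : 0 ≤ θ) (hx : 0 ≤ x) : 0 < stepMap γ θ x := by
  unfold stepMap; positivity

lemma stepMap_le_stepMap {γ' θ' : ℝ} (hx : 0 ≤ x) (hθ : 0 ≤ θ) (hθθ' : θ ≤ θ') (hγγ' : γ' ≤ γ) :
    stepMap γ' θ' x ≤ stepMap γ θ x := by
  unfold stepMap
  gcongr

lemma stepMap_sub_stepMap (hx : 1 + θ * x ≠ 0) (hy : 1 + θ * y ≠ 0) :
    stepMap γ θ x - stepMap γ θ y = (x - y) / ((1 + θ * x) * (1 + θ * y)) := by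
  rw [stepMap, stepMap, add_sub_add_right_eq_sub, div_sub_div _ _ hx hy]
  ring

lemma gFix_pos (hγ : 0 < γ) : 0 < gFix γ θ := by
  unfold gFix; positivity

lemma stepMap_gFix (hγ : 0 < γ) (hθ : 0 < θ) : stepMap γ θ (gFix γ θ) = gFix γ θ := by
  have hs := Real.sq_sqrt (by positivity : (0 : ℝ) ≤ γ ^ 2 + 2 * γ / θ)
  have hden : 0 < 1 + θ * gFix γ θ := by have := gFix_pos (θ := θ) hγ; positivity
  unfold stepMap at *
  unfold gFix at *
  field_simp at hs ⊢
  nlinarith [hs]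

lemma gFix_sub_stepMap_le (hγ : 0 < γ) (hθ : 0 < θ) (hx : 0 ≤ x) :
    gFix γ θ - stepMap γ θ x ≤ max (gFix γ θ - x) 0 / (1 + θ * gFix γ θ) := by
  have hp := gFix_pos (θ := θ) hγ
  conv_lhs => rw [← stepMap_gFix hγ hθ]
  rw [stepMap_sub_stepMap (by positivity) (by positivity)]
  exact div_le_max_zero_div (by positivity) (le_mul_of_one_le_right (by positivity)
    (by nlinarith))

lemma stepMap_sub_gFix_le (hγ : 0 < γ) (hθ : 0 < θ) (hx : 0 ≤ x) :
    stepMap γ θ x - gFix γ θ ≤ max (x - gFix γ θ) 0 / (1 + θ * gFix γ θ) := by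
  have hp := gFix_pos (θ := θ) hγ
  conv_lhs => rw [← stepMap_gFix hγ hθ]
  rw [stepMap_sub_stepMap (by positivity) (by positivity)]
  exact div_le_max_zero_div (by positivity) (le_mul_of_one_le_left (by positivity)
    (by nlinarith))

end stepMap

/-- For any a < g(γ_min, θ_max), b > g(γ_max, θ_min) and x₀ > 0,
there is N (depending only on x₀, a, b and the bounds) such that every orbit of
the non-autonomous recursion starting at x₀ lies in [a,b] from time N on. -/
theorem stmt_5 (γmin γmax θmin θmax a b x₀ : ℝ)
    (hγ : 0 < γmin) (hγ' : γmin ≤ γmax) (hθ : 0 < θmin) (hθ' : θmin ≤ θmax)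
    (ha : a < gFix γmin θmax) (hb : gFix γmax θmin < b) (hx₀ : 0 < x₀) :
    ∃ N : ℕ, ∀ (γs θs x : ℕ → ℝ),
      (∀ j, γs j ∈ Set.Icc γmin γmax) → (∀ j, θs j ∈ Set.Icc θmin θmax) →
      x 0 = x₀ → (∀ j, x (j + 1) = x j / (1 + θs j * x j) + 2 * γs j) →
      ∀ j, N ≤ j → x j ∈ Set.Icc a b := by
  set glo := gFix γmin θmax
  set ghi := gFix γmax θmin
  have hθmax : 0 < θmax := hθ.trans_le hθ'
  have hγmax : 0 < γmax := hγ.trans_le hγ'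
  obtain ⟨N₁, hN₁⟩ := exists_forall_ge_lt_of_le_max_zero_div (B := glo)
    (lt_add_of_pos_right 1 (mul_pos hθmax (gFix_pos hγ))) (sub_pos.2 ha)
  obtain ⟨N₂, hN₂⟩ := exists_forall_ge_lt_of_le_max_zero_div (B := x₀)
    (lt_add_of_pos_right 1 (mul_pos hθ (gFix_pos hγmax))) (sub_pos.2 hb)
  refine ⟨max N₁ N₂, fun γs θs x hγs hθs hx0 hrec j hj => ?_⟩
  have hstep (j : ℕ) : x (j + 1) = stepMap (γs j) (θs j) (x j) := hrec j
  have hnonneg : ∀ j, 0 ≤ x j := by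
    intro j
    induction j with
    | zero => exact hx0 ▸ hx₀.le
    | succ j ih => exact hstep j ▸ (stepMap_pos (hγ.trans_le (hγs j).1)
        (hθ.trans_le (hθs j).1).le ih).le
  have hlower : glo - x j < glo - a := by
    refine hN₁ (fun j => glo - x j) (by linarith [hx0]) (fun j => ?_) j (le_of_max_le_left hj)
    calc glo - x (j + 1) ≤ glo - stepMap γmin θmax (x j) := by
          rw [hstep]
          gcongr
          exact stepMap_le_stepMap (hnonneg j) (hθ.trans_le (hθs j).1).le (hθs j).2 (hγs j).1
      _ ≤ _ := gFix_sub_stepMap_le hγ hθmax (hnonneg j)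
  have hupper : x j - ghi < b - ghi := by
    refine hN₂ (fun j => x j - ghi) (by linarith [gFix_pos (θ := θmin) hγmax]) (fun j => ?_) j
      (le_of_max_le_right hj)
    calc x (j + 1) - ghi ≤ stepMap γmax θmin (x j) - ghi := by
          rw [hstep]
          gcongr
          exact stepMap_le_stepMap (hnonneg j) hθ.le (hθs j).1 (hγs j).2
      _ ≤ _ := stepMap_sub_gFix_le hγmax hθ (hnonneg j)
  constructor <;> linarith
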